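/- arXiv:1110.1158 — 4 statements merged into one kernel-verified Lean document; each statement's English description precedes it below -/
import Mathlib

section
/- Let g ≥ 2 and let π_g be the genus-g surface group. Then the center of π_g is trivial: Subgroup.center π_g = ⊥. -/
open scoped commutatorElement in
/-- The single relator of the genus-`g` surface group:
`∏ i, [aᵢ, bᵢ]` where `aᵢ, bᵢ` are the free generators indexed by `Sum.inl i`, `Sum.inr i`. -/
def surfaceRelator (g : ℕ) : FreeGroup (Fin g ⊕ Fin g) :=
  ((List.finRange g).map fun i =>
    ⁅FreeGroup.of (Sum.inl i : Fin g ⊕ Fin g), FreeGroup.of (Sum.inr i)⁆).prod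

/-- The genus-`g` surface group `π_g`, presented with generators `a₁,…,a_g,b₁,…,b_g`
and the single relator `∏ i, [aᵢ, bᵢ]`. -/
def SurfaceGroup (g : ℕ) : Type :=
  PresentedGroup ({surfaceRelator g} : Set (FreeGroup (Fin g ⊕ Fin g)))

instance (g : ℕ) : Group (SurfaceGroup g) := by unfold SurfaceGroup; infer_instance

/-!
Cutting a genus-`g` surface along a separating curve exhibits `π_g` (for `g ≥ 2`) as an
amalgamated product `A *_ℤ B` of two free groups over the cyclic group of the curve, which maps
to a product of commutators `∏ [aᵢ, bᵢ]` in each factor. In an amalgamated product whose edge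
groups are proper, a central element `z` lies in the edge group: otherwise pick a letter `y`
outside the edge group, from a factor other than that of the first letter of the normal form
of `z`; then `y * z` begins with a letter of `y`'s factor while `z * y` still begins like `z`.
Finally, no nontrivial power of `∏ [aᵢ, bᵢ]` commutes with `b₁`, as the affine action
`a₁ ↦ (· + 1)`, `b₁ ↦ (· * 2)` (other generators trivial) on `ℚ` shows.
-/

open Monoid Function

theorem Subgroup.center_eq_bot_of_mulEquiv {G G' : Type*} [Group G] [Group G'] (e : G ≃* G')
    (h : Subgroup.center G' = ⊥) : Subgroup.center G = ⊥ := by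
  refine eq_bot_iff.2 fun z hz => e.injective ?_
  have : e z ∈ Subgroup.center G' := (Subgroup.centerCongr e ⟨z, hz⟩).2
  simpa [h] using this

section ZPowers

variable {G : Type*} [Group G] {x y : G}

theorem injective_zpowersHom_of_commute (h : ∀ n : ℤ, Commute (x ^ n) y → n = 0) :
    Injective (zpowersHom G x) := by
  refine (injective_iff_map_eq_one _).2 fun m hm => toAdd_eq_zero.1 (h _ ?_)
  rw [← zpowersHom_apply, hm]
  exact Commute.one_left y

theorem zpowers_ne_top_of_commute (h : ∀ n : ℤ, Commute (x ^ n) y → n = 0) (hy : y ≠ 1) :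
    Subgroup.zpowers x ≠ ⊤ := by
  intro htop
  obtain ⟨n, rfl⟩ := Subgroup.mem_zpowers_iff.1 (htop ▸ Subgroup.mem_top y)
  exact hy (by rw [h n (Commute.refl _), zpow_zero])

end ZPowers

namespace Monoid.PushoutI

variable {ι : Type*} {G : ι → Type*} {H : Type*} [∀ i, Group (G i)] [Group H]
  {φ : ∀ i, H →* G i}

open NormalWord

section

variable [DecidableEq ι] [∀ i, DecidableEq (G i)] (d : Transversal φ)

noncomputable def fstIdx (x : PushoutI φ) : Option ι :=
  (equiv (d := d) x).fstIdx

variable {d}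

theorem NormalWord.prod_equiv (x : PushoutI φ) : (equiv (d := d) x).prod = x :=
  equiv.symm_apply_apply x

theorem fstIdx_prod (w : NormalWord d) : fstIdx d w.prod = w.fstIdx := by
  rw [fstIdx]
  exact congrArg (fun w : NormalWord d => w.fstIdx) (equiv.apply_symm_apply w)

theorem fstIdx_of_mul_prod {i : ι} {g : G i} {w : NormalWord d}
    (hmw : w.fstIdx ≠ some i) (hgr : g ∉ (φ i).range) :
    fstIdx d (of i g * w.prod) = some i := by
  rw [← prod_cons g w hmw hgr, fstIdx_prod]
  rfl

theorem fstIdx_base_mul (h : H) (x : PushoutI φ) :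
    fstIdx d (base φ h * x) = fstIdx d x := by
  simp [fstIdx, equiv, mul_smul, base_smul_eq_smul, base_smul_def']

theorem fstIdx_of_ne {i j : ι} (hij : i ≠ j) (g : G j) : fstIdx d (of j g) ≠ some i := by
  by_cases hg : g ∈ (φ j).range
  · obtain ⟨h, rfl⟩ := hg
    rw [of_apply_eq_base, ← mul_one (base φ h), fstIdx_base_mul, ← prod_empty, fstIdx_prod]
    nofun
  · rw [← mul_one (of j g), ← prod_empty, fstIdx_of_mul_prod (by nofun) hg]
    exact fun h => hij (Option.some.inj h).symm

theorem mem_range_base_of_fstIdx_eq_none {x : PushoutI φ} (hx : fstIdx d x = none) :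
    x ∈ (base φ).range := by
  have hnil : (equiv (d := d) x).toList = [] := by
    simpa [fstIdx, CoprodI.Word.fstIdx] using hx
  refine ⟨(equiv (d := d) x).head, ?_⟩
  conv_rhs => rw [← prod_equiv (d := d) x]
  simp [NormalWord.prod, CoprodI.Word.prod, hnil]

theorem fstIdx_prod_mul_of {j : ι} (y : G j) (w : NormalWord d)
    (hw : w.prod ∉ (of (φ := φ) j).range) : fstIdx d (w.prod * of j y) = w.fstIdx := by
  induction w using consRecOn with
  | empty => exact absurd (by simp) hw
  | cons i g w hmw _ hgr _ ih =>
    rw [prod_cons] at hw ⊢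
    have hne : fstIdx d (w.prod * of j y) ≠ some i := by
      by_cases hwj : w.prod ∈ (of (φ := φ) j).range
      · obtain ⟨u, hu⟩ := hwj
        have hij : i ≠ j := by
          rintro rfl
          exact hw ⟨g * u, by rw [map_mul, hu]⟩
        rw [← hu, ← map_mul]
        exact fstIdx_of_ne hij _
      · rw [ih hwj]
        exact hmw
    rw [mul_assoc, ← prod_equiv (d := d) (w.prod * of j y), fstIdx_of_mul_prod hne hgr]
    rfl
  | base h w _ ih =>
    rw [base_smul_eq_smul, prod_base_smul] at hw ⊢
    have hwj : w.prod ∉ (of (φ := φ) j).range := by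
      rintro ⟨u, hu⟩
      exact hw ⟨φ j h * u, by rw [map_mul, hu, of_apply_eq_base]⟩
    rw [mul_assoc, fstIdx_base_mul, ih hwj]
    rfl

theorem fstIdx_mul_of {j : ι} (y : G j) {x : PushoutI φ} (hx : x ∉ (of (φ := φ) j).range) :
    fstIdx d (x * of j y) = fstIdx d x := by
  rw [← prod_equiv (d := d) x] at hx ⊢
  rw [fstIdx_prod_mul_of y _ hx, fstIdx_prod]

end

theorem center_le_range_base [Nontrivial ι] (hφ : ∀ i, Injective (φ i))
    (hproper : ∀ i, (φ i).range ≠ ⊤) : Subgroup.center (PushoutI φ) ≤ (base φ).range := by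
  classical
  obtain ⟨d⟩ := transversal_nonempty φ hφ
  intro z hz
  cases hi : fstIdx d z with
  | none => exact mem_range_base_of_fstIdx_eq_none hi
  | some i =>
    obtain ⟨j, hji⟩ := exists_ne i
    obtain ⟨y, hy⟩ := SetLike.exists_not_mem_of_ne_top _ (hproper j)
    have hleft : fstIdx d (of j y * z) = some j := by
      rw [← prod_equiv (d := d) z, fstIdx_of_mul_prod _ hy]
      rwa [← fstIdx_prod, prod_equiv, hi, ne_eq, Option.some.injEq, eq_comm]
    have hz_notin : z ∉ (of (φ := φ) j).range := by
      rintro ⟨u, rfl⟩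
      exact fstIdx_of_ne hji.symm u hi
    have hright : fstIdx d (z * of j y) = some i := by
      rw [fstIdx_mul_of y hz_notin, hi]
    rw [Subgroup.mem_center_iff.1 hz (of j y)] at hleft
    exact (hji (Option.some.inj (hleft.symm.trans hright))).elim

theorem center_eq_bot [Nontrivial ι] (hφ : ∀ i, Injective (φ i))
    (hproper : ∀ i, (φ i).range ≠ ⊤) (i : ι)
    (hcenter : ∀ h, φ i h ∈ Subgroup.center (G i) → h = 1) :
    Subgroup.center (PushoutI φ) = ⊥ := by
  refine eq_bot_iff.2 fun z hz => ?_
  obtain ⟨h, rfl⟩ := center_le_range_base hφ hproper hz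
  have : φ i h ∈ Subgroup.center (G i) := Subgroup.mem_center_iff.2 fun g => by
    apply of_injective hφ i
    simpa [of_apply_eq_base] using Subgroup.mem_center_iff.1 hz (of i g)
  simp [hcenter h this]

end Monoid.PushoutI

universe u

namespace PresentedGroup

variable {α β : Type u} (r : FreeGroup α) (s : FreeGroup β)

def amalgamatingHom : ∀ b : Bool, Multiplicative ℤ →* FreeGroup (cond b β α)
  | false => zpowersHom _ r
  | true => zpowersHom _ s⁻¹

def pushoutIGens : α ⊕ β → PushoutI (amalgamatingHom r s) :=
  Sum.elim (fun a => PushoutI.of false (.of a)) (fun b => PushoutI.of true (.of b))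

def toPushoutI :
    PresentedGroup {FreeGroup.map Sum.inl r * FreeGroup.map Sum.inr s} →*
      PushoutI (amalgamatingHom r s) :=
  toGroup (f := pushoutIGens r s) <| by
    rintro _ rfl
    have hl : (FreeGroup.lift (pushoutIGens r s)).comp (FreeGroup.map Sum.inl) =
        PushoutI.of (φ := amalgamatingHom r s) false := FreeGroup.ext_hom _ _ fun _ => rfl
    have hr : (FreeGroup.lift (pushoutIGens r s)).comp (FreeGroup.map Sum.inr) =
        PushoutI.of (φ := amalgamatingHom r s) true := FreeGroup.ext_hom _ _ fun _ => rfl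
    rw [map_mul, ← MonoidHom.comp_apply, hl, ← MonoidHom.comp_apply, hr]
    have h1 : PushoutI.of (φ := amalgamatingHom r s) false r = PushoutI.base _ (.ofAdd 1) := by
      rw [← PushoutI.of_apply_eq_base _ false]; simp [amalgamatingHom]
    have h2 : PushoutI.of (φ := amalgamatingHom r s) true s = (PushoutI.base _ (.ofAdd 1))⁻¹ := by
      rw [← PushoutI.of_apply_eq_base _ true, ← map_inv]; simp [amalgamatingHom]
    rw [h1, h2, mul_inv_cancel]

def ofPushoutI :
    PushoutI (amalgamatingHom r s) →*
      PresentedGroup {FreeGroup.map Sum.inl r * FreeGroup.map Sum.inr s} :=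
  PushoutI.lift (fun b => match b with
      | false => (mk _).comp (FreeGroup.map Sum.inl)
      | true => (mk _).comp (FreeGroup.map Sum.inr))
    (zpowersHom _ (mk _ (FreeGroup.map Sum.inl r))) <| by
    intro b
    ext
    cases b
    · simp [amalgamatingHom]
    · have := one_of_mem (Set.mem_singleton (FreeGroup.map Sum.inl r * FreeGroup.map Sum.inr s))
      rw [map_mul] at this
      simp [amalgamatingHom, eq_inv_of_mul_eq_one_left this]

def mulEquivPushoutI :
    PresentedGroup {FreeGroup.map Sum.inl r * FreeGroup.map Sum.inr s} ≃*
      PushoutI (amalgamatingHom r s) :=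
  MonoidHom.toMulEquiv (toPushoutI r s) (ofPushoutI r s)
    (ext <| Sum.rec (fun _ => rfl) (fun _ => rfl))
    (PushoutI.hom_ext_nonempty fun b => by cases b <;> exact FreeGroup.ext_hom _ _ fun _ => rfl)

end PresentedGroup

def surfaceGensEquiv (g h : ℕ) :
    Fin (g + h) ⊕ Fin (g + h) ≃ (Fin g ⊕ Fin g) ⊕ (Fin h ⊕ Fin h) :=
  (Equiv.sumCongr finSumFinEquiv.symm finSumFinEquiv.symm).trans (Equiv.sumSumSumComm _ _ _ _)

theorem map_surfaceRelator_add (g h : ℕ) :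
    FreeGroup.map (surfaceGensEquiv g h) (surfaceRelator (g + h)) =
      FreeGroup.map Sum.inl (surfaceRelator g) * FreeGroup.map Sum.inr (surfaceRelator h) := by
  simp only [surfaceRelator, ← List.ofFn_eq_map, List.ofFn_add, List.prod_append, map_mul,
    map_list_prod, List.map_ofFn]
  congr 3 <;> funext i
  · have : Fin.castLE (Nat.le_add_right g h) i = Fin.castAdd h i := rfl
    simp [map_commutatorElement, surfaceGensEquiv, this]
  · simp [map_commutatorElement, surfaceGensEquiv]

def affineRep (g : ℕ) : FreeGroup (Fin (g + 1) ⊕ Fin (g + 1)) →* Equiv.Perm ℚ :=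
  FreeGroup.lift <| Sum.elim (fun i => if i = 0 then Equiv.addRight 1 else 1)
    (fun i => if i = 0 then Equiv.mulRight₀ 2 two_ne_zero else 1)

theorem affineRep_surfaceRelator (g : ℕ) :
    affineRep g (surfaceRelator (g + 1)) = Equiv.addRight (-1) := by
  rw [surfaceRelator, map_list_prod, List.finRange_succ, List.map_cons, List.map_cons,
    List.prod_cons, List.map_map, List.map_map]
  rw [List.prod_eq_one (by simp [affineRep, Fin.succ_ne_zero])]
  ext q
  simp [affineRep, commutatorElement_def, Equiv.Perm.mul_apply]
  ring

theorem eq_zero_of_commute_surfaceRelator_zpow {g : ℕ} {n : ℤ}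
    (h : Commute (surfaceRelator (g + 1) ^ n) (FreeGroup.of (Sum.inr 0))) : n = 0 := by
  have h0 := congrArg (· 0) (h.map (affineRep g)).eq
  simp only [Equiv.Perm.mul_apply, map_zpow, affineRep_surfaceRelator] at h0
  have : (n : ℚ) = 0 := by simp [affineRep] at h0; linarith
  exact_mod_cast this

theorem center_surfaceGroup_add_eq_bot (g h : ℕ) :
    Subgroup.center (SurfaceGroup (g + 1 + (h + 1))) = ⊥ := by
  refine Subgroup.center_eq_bot_of_mulEquiv
    (PresentedGroup.equivPresentedGroup _ (surfaceGensEquiv (g + 1) (h + 1))) ?_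
  rw [Set.image_singleton, FreeGroup.freeGroupCongr_apply, map_surfaceRelator_add]
  refine Subgroup.center_eq_bot_of_mulEquiv (PresentedGroup.mulEquivPushoutI _ _) ?_
  have hr (n : ℤ) := eq_zero_of_commute_surfaceRelator_zpow (g := g) (n := n)
  have hs (n : ℤ) (hn : Commute ((surfaceRelator (h + 1))⁻¹ ^ n) (.of (.inr 0))) : n = 0 :=
    neg_eq_zero.1 (eq_zero_of_commute_surfaceRelator_zpow (by rwa [← inv_zpow']))
  refine PushoutI.center_eq_bot ?_ ?_ false fun m hm => toAdd_eq_zero.1 (hr _ ?_)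
  · rintro (_ | _)
    exacts [injective_zpowersHom_of_commute hr, injective_zpowersHom_of_commute hs]
  · rintro (_ | _)
    exacts [zpowers_ne_top_of_commute hr (FreeGroup.of_ne_one _),
      zpowers_ne_top_of_commute hs (FreeGroup.of_ne_one _)]
  · exact (Subgroup.mem_center_iff.1 hm _).symm

/-- For `g ≥ 2`, the center of the genus-`g` surface group is trivial. -/
theorem surfaceGroup_center_eq_bot (g : ℕ) (hg : 2 ≤ g) :
    Subgroup.center (SurfaceGroup g) = ⊥ := by
  obtain ⟨k, rfl⟩ : ∃ k, g = k + 1 + 1 := ⟨g - 2, by omega⟩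
  exact center_surfaceGroup_add_eq_bot k 0
end

section
/- A map on a wedge of two circles extends over the torus if and only if the loops commute in the fundamental group: let X be a topological space, x : X, and let a, b : C(Circle, X) be continuous maps with a 1 = x = b 1. Then there exists a continuous map F : C(Circle × Circle, X) with F(z, 1) = a z for all z and F(1, w) = b w for all w, if and only if the homotopy classes [a] and [b] of the corresponding based loops commute in the fundamental group π₁(X, x). -/
attribute [local instance] Path.Homotopic.setoid

/-- The based loop `t ↦ a (exp (2 π i t))` at `x` associated to a free loop
`a : C(Circle, X)` with `a 1 = x`. -/
noncomputable def basedLoopOf {X : Type*} [TopologicalSpace X] {x : X}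
    (a : C(Circle, X)) (ha : a 1 = x) : Path x x where
  toFun t := a (Circle.exp (2 * Real.pi * t))
  continuous_toFun := by fun_prop
  source' := by simp [ha]
  target' := by simp [ha]

/-- The class in the fundamental group `π₁(X, x)` of the based loop associated to a free
loop `a : C(Circle, X)` with `a 1 = x`. -/
noncomputable def loopClass {X : Type*} [TopologicalSpace X] {x : X}
    (a : C(Circle, X)) (ha : a 1 = x) : FundamentalGroup X x :=
  FundamentalGroup.fromPath (X := TopCat.of X) ⟦basedLoopOf a ha⟧

/-!
A map on the torus is a map on the square `I × I` that agrees on opposite edges. If `F` extends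
`a` and `b`, then `[a]` and `[b]` are the images under `F` of the loops `circle × 1` and
`1 × circle`, which commute in `π₁` of the product. Conversely, for the based loops `α`, `β` of
`a`, `b`, a homotopy `H` from `α·β` to `β·α` is a square whose bottom reads `α·β`, whose top reads
`β·α` and whose sides are constant. Folding the square `I × I` along its diagonal onto it, so that
the anti-diagonal `s + t = 2u` is sent onto the track `τ ↦ H (τ, u)`, gives a map of `I × I`
reading `α` on both horizontal and `β` on both vertical edges; it descends to the torus since
`I × I → Circle × Circle` is a quotient map.
-/

open unitInterval Set Topology

lemma ContinuousMap.continuousAt_apply_of_const_on_slice {X Y Z W : Type*} [TopologicalSpace X]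
    [TopologicalSpace Y] [TopologicalSpace Z] [TopologicalSpace W] [CompactSpace Z]
    (g : C(Z × Y, X)) {y₀ : Y} {x₀ : X} (hg : ∀ z, g (z, y₀) = x₀) (τ : W → Z) {u : W → Y}
    {w₀ : W} (hu : ContinuousAt u w₀) (hw₀ : u w₀ = y₀) :
    ContinuousAt (fun w => g (τ w, u w)) w₀ := by
  subst hw₀
  intro U hU
  replace hU : U ∈ 𝓝 x₀ := by simpa only [hg] using hU
  have hU' : ∀ᶠ y in 𝓝 (u w₀), ∀ z ∈ univ, g (z, y) ∈ U :=
    isCompact_univ.eventually_forall_of_forall_eventually fun z _ =>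
      (g.continuous.comp continuous_swap).continuousAt.preimage_mem_nhds (by simpa [hg] using hU)
  exact (hu.eventually hU').mono fun w hw => hw _ trivial

namespace Path

variable {X : Type*} [TopologicalSpace X] {x y z : X}

lemma trans_apply_projIcc_half (γ : Path x y) (γ' : Path y z) (s : I) :
    γ.trans γ' (projIcc 0 1 zero_le_one (s / 2)) = γ s := by
  have hs : (s : ℝ) / 2 ∈ Icc 0 1 := ⟨by linarith [s.2.1], by linarith [s.2.2]⟩
  rw [trans_apply, projIcc_of_mem _ hs, dif_pos (by linarith [s.2.2])]
  congr 1
  ext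
  change 2 * ((s : ℝ) / 2) = s
  ring

lemma trans_apply_projIcc_one_add_half (γ : Path x y) (γ' : Path y z) (s : I) :
    γ.trans γ' (projIcc 0 1 zero_le_one ((1 + s) / 2)) = γ' s := by
  have hs : (1 + s : ℝ) / 2 ∈ Icc 0 1 := ⟨by linarith [s.2.1], by linarith [s.2.2]⟩
  rw [trans_apply, projIcc_of_mem _ hs]
  split_ifs with h
  · change (1 + (s : ℝ)) / 2 ≤ 1 / 2 at h
    obtain rfl : s = 0 := Icc.coe_eq_zero.1 (by linarith [s.2.1])
    simp
  · congr 1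
    ext
    change 2 * ((1 + (s : ℝ)) / 2) - 1 = s
    ring

end Path

/-- Together with `(s + t) / 2`, the time coordinate of the fold of the square onto the domain of a
path homotopy: along each anti-diagonal it runs linearly from `0` on the bottom and right edges to
`1` on the left and top edges. At the corners `(0, 0)` and `(1, 1)` it is the junk value `0 / 0`. -/
noncomputable def squareFoldTime (s t : ℝ) : ℝ :=
  (t - s + min (s + t) (2 - s - t)) / (2 * min (s + t) (2 - s - t))

lemma squareFoldTime_bottom {s : ℝ} (hs : s ≤ 1) : squareFoldTime s 0 = 0 := by
  rw [squareFoldTime, min_eq_left (by linarith)]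
  ring

lemma squareFoldTime_right {t : ℝ} (ht : 0 ≤ t) : squareFoldTime 1 t = 0 := by
  rw [squareFoldTime, min_eq_right (by linarith)]
  ring

lemma squareFoldTime_left {t : ℝ} (h₀ : 0 < t) (h₁ : t ≤ 1) : squareFoldTime 0 t = 1 := by
  rw [squareFoldTime, min_eq_left (by linarith)]
  field_simp
  ring

lemma squareFoldTime_top {s : ℝ} (h₀ : 0 ≤ s) (h₁ : s < 1) : squareFoldTime s 1 = 1 := by
  rw [squareFoldTime, min_eq_right (by linarith)]
  field_simp [show 2 - s - 1 ≠ 0 by linarith]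
  ring

namespace Path.Homotopy

variable {X : Type*} [TopologicalSpace X] {x y z w : X} {γ₁ : Path x y} {γ₂ : Path y z}
  {δ₁ : Path x w} {δ₂ : Path w z}

noncomputable def fillSquare (H : (γ₁.trans γ₂).Homotopy (δ₁.trans δ₂)) (p : I × I) : X :=
  H (projIcc 0 1 zero_le_one (squareFoldTime p.1 p.2),
    projIcc 0 1 zero_le_one ((p.1 + p.2) / 2))

variable (H : (γ₁.trans γ₂).Homotopy (δ₁.trans δ₂))

lemma continuous_fillSquare : Continuous H.fillSquare := by
  refine continuous_iff_continuousAt.2 fun p => ?_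
  by_cases hm : min ((p.1 : ℝ) + p.2) (2 - p.1 - p.2) = 0
  -- at a corner the fold time jumps, but it is only read on a constant side of `H`
  · have hu : Continuous fun p : I × I => projIcc 0 1 zero_le_one (((p.1 : ℝ) + p.2) / 2) := by
      fun_prop
    rcases min_eq_iff.1 hm with ⟨hm, -⟩ | ⟨hm, -⟩
    · exact ContinuousMap.continuousAt_apply_of_const_on_slice H.toContinuousMap H.source _
        hu.continuousAt (by simp [hm])
    · exact ContinuousMap.continuousAt_apply_of_const_on_slice H.toContinuousMap H.target _
        hu.continuousAt
        (by rw [show ((p.1 : ℝ) + p.2) / 2 = 1 by linarith]; simp)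
  · have : ContinuousAt (fun p : I × I => squareFoldTime p.1 p.2) p := by
      unfold squareFoldTime
      fun_prop (disch := simpa using hm)
    unfold fillSquare
    fun_prop

lemma fillSquare_bottom (s : I) : H.fillSquare (s, 0) = γ₁ s := by
  simp [fillSquare, squareFoldTime_bottom s.2.2, Path.trans_apply_projIcc_half]

lemma fillSquare_right (t : I) : H.fillSquare (1, t) = γ₂ t := by
  simp [fillSquare, squareFoldTime_right t.2.1, Path.trans_apply_projIcc_one_add_half]

lemma fillSquare_left (t : I) : H.fillSquare (0, t) = δ₁ t := by
  rcases eq_or_ne t 0 with rfl | ht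
  · simp [fillSquare]
  simp [fillSquare, squareFoldTime_left (unitInterval.pos_iff_ne_zero.2 ht) t.2.2,
    Path.trans_apply_projIcc_half]

lemma fillSquare_top (s : I) : H.fillSquare (s, 1) = δ₂ s := by
  rcases eq_or_ne s 1 with rfl | hs
  · simp [fillSquare]
  simp [fillSquare, squareFoldTime_top s.2.1 (unitInterval.lt_one_iff_ne_one.2 hs),
    add_comm (s : ℝ) 1, Path.trans_apply_projIcc_one_add_half]

end Path.Homotopy

noncomputable def circleLoop : Path (1 : Circle) 1 where
  toFun t := Circle.exp (2 * Real.pi * t)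
  continuous_toFun := by fun_prop
  source' := by simp
  target' := by simp

lemma basedLoopOf_apply {X : Type*} [TopologicalSpace X] {x : X} (a : C(Circle, X))
    (ha : a 1 = x) (t : I) : basedLoopOf a ha t = a (circleLoop t) :=
  rfl

lemma circleLoop_surjective : Function.Surjective circleLoop := by
  intro z
  obtain ⟨θ, hθ, rfl⟩ : z ∈ Circle.exp '' Icc 0 (0 + 2 * Real.pi) := by
    rw [Circle.periodic_exp.image_Icc Real.two_pi_pos]
    exact Circle.exp_surjective z
  have hπ := Real.two_pi_pos
  refine ⟨⟨θ / (2 * Real.pi), div_nonneg hθ.1 hπ.le, (div_le_one hπ).2 (by linarith [hθ.2])⟩, ?_⟩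
  change Circle.exp (2 * Real.pi * (θ / (2 * Real.pi))) = _
  rw [mul_div_cancel₀ _ hπ.ne']

lemma apply_eq_apply_of_circleLoop_eq {X : Type*} {f : I → X} (hf : f 0 = f 1) {s s' : I}
    (h : circleLoop s = circleLoop s') : f s = f s' := by
  obtain ⟨m, hm⟩ := Circle.exp_eq_exp.1 h
  have hsm : (s : ℝ) = s' + m := by
    have : 2 * Real.pi * (s : ℝ) = 2 * Real.pi * (s' + m) := by linear_combination hm
    exact mul_left_cancel₀ Real.two_pi_pos.ne' this
  have hm₁ : (m : ℝ) ≤ 1 := by linarith [s.2.2, s'.2.1]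
  have hm₂ : (-1 : ℝ) ≤ m := by linarith [s.2.1, s'.2.2]
  obtain rfl | rfl | rfl : m = 0 ∨ m = 1 ∨ m = -1 := by
    have : m ≤ 1 := by exact_mod_cast hm₁
    have : -1 ≤ m := by exact_mod_cast hm₂
    omega
  · rw [show s = s' from Subtype.ext (by simpa using hsm)]
  · obtain ⟨rfl, rfl⟩ : s = 1 ∧ s' = 0 := by
      constructor <;> ext <;> push_cast at hsm ⊢ <;> linarith [s.2.2, s'.2.1]
    exact hf.symm
  · obtain ⟨rfl, rfl⟩ : s = 0 ∧ s' = 1 := by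
      constructor <;> ext <;> push_cast at hsm ⊢ <;> linarith [s.2.1, s'.2.2]
    exact hf

lemma isQuotientMap_prodMap_circleLoop :
    IsQuotientMap (circleLoop.toContinuousMap.prodMap circleLoop.toContinuousMap) :=
  have hc := (circleLoop.toContinuousMap.prodMap circleLoop.toContinuousMap).continuous
  hc.isClosedMap.isQuotientMap hc (circleLoop_surjective.prodMap circleLoop_surjective)

lemma ContinuousMap.exists_circle_prod_lift {X : Type*} [TopologicalSpace X] (g : C(I × I, X))
    (h₁ : ∀ t, g (0, t) = g (1, t)) (h₂ : ∀ s, g (s, 0) = g (s, 1)) :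
    ∃ G : C(Circle × Circle, X), ∀ s t, G (circleLoop s, circleLoop t) = g (s, t) := by
  have hg : Function.FactorsThrough g
      (circleLoop.toContinuousMap.prodMap circleLoop.toContinuousMap) := by
    rintro ⟨s, t⟩ ⟨s', t'⟩ h
    obtain ⟨hs, ht⟩ := Prod.ext_iff.1 h
    calc g (s, t) = g (s', t) := apply_eq_apply_of_circleLoop_eq (f := fun s => g (s, t)) (h₁ t) hs
      _ = g (s', t') := apply_eq_apply_of_circleLoop_eq (f := fun t => g (s', t)) (h₂ s') ht
  exact ⟨isQuotientMap_prodMap_circleLoop.lift g hg,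
    fun s t => DFunLike.congr_fun (isQuotientMap_prodMap_circleLoop.lift_comp g hg) (s, t)⟩

theorem FundamentalGroup.commute_prod_refl_refl_prod {Y Z : Type*} [TopologicalSpace Y]
    [TopologicalSpace Z] {y : Y} {z : Z} (γ : Path.Homotopic.Quotient y y)
    (δ : Path.Homotopic.Quotient z z) :
    Commute (FundamentalGroup.fromPath (Path.Homotopic.prod γ (.refl z)))
      (FundamentalGroup.fromPath (Path.Homotopic.prod (.refl y) δ)) := by
  simp only [Commute, SemiconjBy, FundamentalGroup.mul_def, Path.Homotopic.comp_prod_eq_prod_comp,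
    Path.Homotopic.Quotient.refl_trans, Path.Homotopic.Quotient.trans_refl]

section TorusExtension

variable {X : Type*} [TopologicalSpace X] {x : X} {a b : C(Circle, X)} {ha : a 1 = x}
  {hb : b 1 = x}

lemma commute_loopClass_of_torus_extension (F : C(Circle × Circle, X)) (hFa : ∀ z, F (z, 1) = a z)
    (hFb : ∀ w, F (1, w) = b w) : Commute (loopClass a ha) (loopClass b hb) := by
  obtain rfl : F (1, 1) = x := (hFa 1).trans ha
  have hα : basedLoopOf a ha = (circleLoop.prod (Path.refl 1)).map F.continuous :=
    Path.ext <| funext fun t => (hFa _).symm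
  have hβ : basedLoopOf b hb = ((Path.refl 1).prod circleLoop).map F.continuous :=
    Path.ext <| funext fun t => (hFb _).symm
  rw [loopClass, loopClass, hα, hβ]
  exact (FundamentalGroup.commute_prod_refl_refl_prod ⟦circleLoop⟧ ⟦circleLoop⟧).map
    (FundamentalGroup.map F (1, 1))

lemma exists_torus_extension_of_homotopy
    (H : ((basedLoopOf a ha).trans (basedLoopOf b hb)).Homotopy
      ((basedLoopOf b hb).trans (basedLoopOf a ha))) :
    ∃ F : C(Circle × Circle, X), (∀ z, F (z, 1) = a z) ∧ (∀ w, F (1, w) = b w) := by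
  obtain ⟨G, hG⟩ := ContinuousMap.exists_circle_prod_lift ⟨H.fillSquare, H.continuous_fillSquare⟩
    (fun t => (H.fillSquare_left t).trans (H.fillSquare_right t).symm)
    (fun s => (H.fillSquare_bottom s).trans (H.fillSquare_top s).symm)
  refine ⟨G, fun z => ?_, fun w => ?_⟩
  · obtain ⟨s, rfl⟩ := circleLoop_surjective z
    simpa [basedLoopOf_apply] using (hG s 0).trans (H.fillSquare_bottom s)
  · obtain ⟨t, rfl⟩ := circleLoop_surjective w
    simpa [basedLoopOf_apply] using (hG 0 t).trans (H.fillSquare_left t)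

end TorusExtension

/-- A map on the wedge of two circles extends over the torus if and only if the
corresponding based loops commute in the fundamental group. -/
theorem exists_torus_extension_iff_commute {X : Type*} [TopologicalSpace X] (x : X)
    (a b : C(Circle, X)) (ha : a 1 = x) (hb : b 1 = x) :
    (∃ F : C(Circle × Circle, X),
        (∀ z : Circle, F (z, 1) = a z) ∧ (∀ w : Circle, F (1, w) = b w)) ↔
      loopClass a ha * loopClass b hb = loopClass b hb * loopClass a ha := by
  refine ⟨fun ⟨F, hFa, hFb⟩ => commute_loopClass_of_torus_extension F hFa hFb, fun h => ?_⟩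
  -- in `π₁`, `[p] * [q]` is the class of `q.trans p`
  obtain ⟨H⟩ := Quotient.exact h.symm
  exact exists_torus_extension_of_homotopy H
end

section
/- For a path-connected topological space X with basepoint x, the set of path components of the free loop space of X is in bijection with the set of conjugacy classes of the fundamental group: there is an equivalence ZerothHomotopy C(Circle, X) ≃ ConjClasses (FundamentalGroup X x). -/
/-!
Model the circle as `ℝ/ℤ`. A free loop `f` restricts to a based loop at `f 0`; transporting it
to `x` along a chosen path gives a conjugacy class in `π₁(X, x)`, and another choice of path only
conjugates it. A path of free loops from `f` to `g` is a free homotopy, and the trajectory of `0`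
under it conjugates the based loops of `f` and `g` (a square argument). Conversely, if
`γ ⬝ c ≃ c ⬝ δ` then `γ ≃ (c ⬝ δ) ⬝ c⁻¹`, and rotating the circle by half a turn turns this free
loop into `c⁻¹ ⬝ (c ⬝ δ) ≃ δ`. Every class is attained by the free loop of a based loop at `x`.
-/

open unitInterval CategoryTheory Topology

noncomputable section

local notation "𝕋" => AddCircle (1 : ℝ)

variable {X : Type*} [TopologicalSpace X] {x y z : X}

def Homeomorph.zerothHomotopyCongr {Y : Type*} [TopologicalSpace Y] (e : X ≃ₜ Y) :
    ZerothHomotopy X ≃ ZerothHomotopy Y :=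
  _root_.Quotient.congr e.toEquiv fun a b ↦ show Joined a b ↔ Joined (e a) (e b) from
    ⟨fun h ↦ h.map e.continuous, fun h ↦ by simpa using h.map e.symm.continuous⟩

lemma ContinuousMap.joined_comp_addRight {G : Type*} [AddZeroClass G] [TopologicalSpace G]
    [ContinuousAdd G] (f : C(G, X)) {a : G} (ha : Joined 0 a) :
    Joined f (f.comp (ContinuousMap.addRight a)) := by
  convert ha.map (ContinuousMap.curry ⟨fun p : G × G ↦ f (p.2 + p.1), by fun_prop⟩).continuous
    using 1 <;> ext <;> simp

lemma CategoryTheory.Groupoid.isConj_conj_iff {C : Type*} [Groupoid C] {x y z : C} (α : y ≅ x)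
    (β : z ≅ x) (u : End y) (w : End z) :
    IsConj (α.conj u) (β.conj w) ↔ ∃ c : y ⟶ z, u ≫ c = c ≫ w := by
  simp only [isConj_iff, mul_inv_eq_iff_eq_mul]
  simp only [End.mul_def, Iso.conj_apply]
  constructor
  · rintro ⟨g, hg⟩
    exact ⟨α.hom ≫ g ≫ β.inv, by simpa using α.hom ≫= hg =≫ β.inv⟩
  · rintro ⟨c, hc⟩
    exact ⟨α.inv ≫ c ≫ β.hom, by simp [reassoc_of% hc]⟩

namespace AddCircle

def unitLoop : Path (0 : 𝕋) 0 where
  toFun t := ((t : ℝ) : 𝕋)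
  continuous_toFun := (AddCircle.continuous_mk' 1).comp continuous_subtype_val
  source' := by simp
  target' := by simp

lemma unitLoop_surjective : Function.Surjective unitLoop := fun z ↦ by
  obtain ⟨t, ht, rfl⟩ := eq_coe_Ico z
  exact ⟨⟨t, ht.1, ht.2.le⟩, rfl⟩

lemma isQuotientMap_prodMap_unitLoop (Y : Type*) [TopologicalSpace Y] [CompactSpace Y]
    [T2Space Y] : IsQuotientMap (Prod.map id unitLoop : Y × I → Y × 𝕋) :=
  have hc : Continuous (Prod.map id unitLoop : Y × I → Y × 𝕋) :=
    continuous_id.prodMap unitLoop.continuous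
  hc.isClosedMap.isQuotientMap hc (Function.surjective_id.prodMap unitLoop_surjective)

end AddCircle

namespace Path

def toFreeLoop (γ : Path x x) : C(𝕋, X) :=
  ⟨AddCircle.liftIco 1 0 γ.extend,
    AddCircle.liftIco_zero_continuous (by simp) γ.continuous_extend.continuousOn⟩

lemma toFreeLoop_apply (γ : Path x x) (z : 𝕋) :
    γ.toFreeLoop z = AddCircle.liftIco 1 0 γ.extend z := rfl

lemma toFreeLoop_coe (γ : Path x x) {t : ℝ} (ht : t ∈ Set.Icc 0 1) :
    γ.toFreeLoop t = γ.extend t := by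
  rcases ht.2.lt_or_eq with h | rfl
  · rw [toFreeLoop_apply, AddCircle.liftIco_zero_coe_apply ⟨ht.1, h⟩]
  · rw [toFreeLoop_apply, AddCircle.coe_period, ← QuotientAddGroup.mk_zero,
      AddCircle.liftIco_zero_coe_apply (by simp)]
    simp

lemma toFreeLoop_unitLoop (γ : Path x x) (t : I) :
    γ.toFreeLoop (AddCircle.unitLoop t) = γ t := by
  rw [← γ.extend_apply]
  exact γ.toFreeLoop_coe t.2

lemma toFreeLoop_zero (γ : Path x x) : γ.toFreeLoop 0 = x := by
  simpa using γ.toFreeLoop_unitLoop 0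

end Path

def ContinuousMap.basedLoop (f : C(𝕋, X)) : Path (f 0) (f 0) :=
  AddCircle.unitLoop.map f.continuous

lemma ContinuousMap.toFreeLoop_basedLoop (f : C(𝕋, X)) : f.basedLoop.toFreeLoop = f := by
  ext z
  obtain ⟨t, rfl⟩ := AddCircle.unitLoop_surjective z
  exact f.basedLoop.toFreeLoop_unitLoop t

lemma Path.basedLoop_toFreeLoop (γ : Path x x) :
    γ.toFreeLoop.basedLoop = γ.cast γ.toFreeLoop_zero γ.toFreeLoop_zero := by
  ext t
  exact γ.toFreeLoop_unitLoop t

theorem Path.Homotopic.joined_toFreeLoop {γ γ' : Path x x} (h : γ.Homotopic γ') :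
    Joined γ.toFreeLoop γ'.toFreeLoop := by
  obtain ⟨F⟩ := h
  let H : I × 𝕋 → X := fun p ↦ (F.eval p.1).toFreeLoop p.2
  have hH : Continuous H := by
    rw [(AddCircle.isQuotientMap_prodMap_unitLoop I).continuous_iff]
    convert F.continuous using 1
    ext ⟨s, t⟩
    exact (F.eval s).toFreeLoop_unitLoop t
  refine ⟨{ toContinuousMap := ContinuousMap.curry ⟨H, hH⟩, source' := ?_, target' := ?_ }⟩ <;>
    ext <;> simp [H]

lemma Path.toFreeLoop_trans_comp_addRight (p : Path x y) (q : Path y x) :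
    (p.trans q).toFreeLoop.comp (ContinuousMap.addRight ((1 / 2 : ℝ) : 𝕋)) =
      (q.trans p).toFreeLoop := by
  ext z
  obtain ⟨t, ht, rfl⟩ := AddCircle.eq_coe_Ico z
  change (p.trans q).toFreeLoop ((t + 1 / 2 : ℝ) : 𝕋) = _
  rw [(q.trans p).toFreeLoop_coe ⟨ht.1, ht.2.le⟩]
  rcases lt_or_ge t (1 / 2) with h | h
  · rw [toFreeLoop_coe _ ⟨by linarith [ht.1], by linarith⟩,
      extend_trans_of_half_le _ _ (by linarith [ht.1]), extend_trans_of_le_half _ _ h.le]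
    ring_nf
  · rw [show t + 1 / 2 = t - 1 / 2 + 1 by ring, AddCircle.coe_add_period,
      toFreeLoop_coe _ ⟨by linarith, by linarith [ht.2]⟩,
      extend_trans_of_le_half _ _ (by linarith [ht.2]), extend_trans_of_half_le _ _ h]
    ring_nf

lemma Path.joined_toFreeLoop_trans_comm (p : Path x y) (q : Path y x) :
    Joined (p.trans q).toFreeLoop (q.trans p).toFreeLoop := by
  simpa only [toFreeLoop_trans_comp_addRight] using
    (p.trans q).toFreeLoop.joined_comp_addRight (PathConnectedSpace.joined 0 ((1 / 2 : ℝ) : 𝕋))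

lemma Path.joined_toFreeLoop_of_homotopic_trans {γ : Path y y} {δ : Path z z} (c : Path y z)
    (h : (γ.trans c).Homotopic (c.trans δ)) : Joined γ.toFreeLoop δ.toFreeLoop := by
  have hγ : γ.Homotopic ((c.trans δ).trans c.symm) := by
    rw [← Homotopic.Quotient.eq, Homotopic.Quotient.mk_trans, Homotopic.Quotient.mk_symm,
      ← Homotopic.Quotient.eq.mpr h]
    simp [Homotopic.Quotient.mk_trans]
  have hδ : (c.symm.trans (c.trans δ)).Homotopic δ := by
    rw [← Homotopic.Quotient.eq, Homotopic.Quotient.mk_trans, Homotopic.Quotient.mk_trans,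
      Homotopic.Quotient.mk_symm, ← Homotopic.Quotient.trans_assoc,
      Homotopic.Quotient.symm_trans, Homotopic.Quotient.refl_trans]
  exact hγ.joined_toFreeLoop.trans
    ((joined_toFreeLoop_trans_comm _ _).trans hδ.joined_toFreeLoop)

lemma ContinuousMap.exists_homotopic_trans_of_joined {f g : C(𝕋, X)} (h : Joined f g) :
    ∃ c : Path (f 0) (g 0), (f.basedLoop.trans c).Homotopic (c.trans g.basedLoop) := by
  obtain ⟨P⟩ := h
  let F : f.Homotopy g :=
    { toFun := fun p ↦ P p.1 p.2
      continuous_toFun := by fun_prop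
      map_zero_left := by simp
      map_one_left := by simp }
  exact ⟨F.evalAt 0, Path.Homotopic.map_trans_evalAt F AddCircle.unitLoop⟩

lemma ContinuousMap.joined_iff_exists_homotopic_trans {f g : C(𝕋, X)} :
    Joined f g ↔ ∃ c : Path (f 0) (g 0), (f.basedLoop.trans c).Homotopic (c.trans g.basedLoop) :=
  ⟨exists_homotopic_trans_of_joined, fun ⟨c, h⟩ ↦ by
    simpa only [toFreeLoop_basedLoop] using Path.joined_toFreeLoop_of_homotopic_trans c h⟩

section PathConnected

variable [PathConnectedSpace X]

def Path.conjClass (x : X) (γ : Path y y) : ConjClasses (FundamentalGroup X x) :=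
  ConjClasses.mk (((Groupoid.isoEquivHom (FundamentalGroupoid.mk y) (FundamentalGroupoid.mk x)).symm
    (Homotopic.Quotient.mk (PathConnectedSpace.somePath y x))).conj
      (FundamentalGroup.fromPath (Homotopic.Quotient.mk γ)))

lemma Path.conjClass_eq_conjClass_iff (x : X) {γ : Path y y} {δ : Path z z} :
    γ.conjClass x = δ.conjClass x ↔ ∃ c : Path y z, (γ.trans c).Homotopic (c.trans δ) := by
  rw [conjClass, conjClass, ConjClasses.mk_eq_mk_iff_isConj, Groupoid.isConj_conj_iff]
  constructor
  · rintro ⟨c, hc⟩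
    obtain ⟨c, rfl⟩ := Homotopic.Quotient.mk_surjective c
    exact ⟨c, Homotopic.Quotient.eq.mp hc⟩
  · rintro ⟨c, hc⟩
    exact ⟨Homotopic.Quotient.mk c, Homotopic.Quotient.eq.mpr hc⟩

lemma Path.conjClass_cast (x : X) {y' : X} (γ : Path y y) (h : y' = y) :
    (γ.cast h h).conjClass x = γ.conjClass x := by
  subst h
  rfl

lemma Path.conjClass_eq_mk (γ : Path x x) :
    γ.conjClass x = ConjClasses.mk (FundamentalGroup.fromPath (Homotopic.Quotient.mk γ)) := by
  rw [conjClass, ConjClasses.mk_eq_mk_iff_isConj]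
  simpa using (Groupoid.isConj_conj_iff _ (Iso.refl _) _ _).mpr ⟨𝟙 _, by simp⟩

lemma ContinuousMap.conjClass_basedLoop_eq_iff (x : X) {f g : C(𝕋, X)} :
    f.basedLoop.conjClass x = g.basedLoop.conjClass x ↔ Joined f g :=
  (Path.conjClass_eq_conjClass_iff x).trans joined_iff_exists_homotopic_trans.symm

lemma surjective_conjClass_basedLoop (x : X) :
    Function.Surjective fun f : C(𝕋, X) ↦ f.basedLoop.conjClass x := by
  intro q
  obtain ⟨a, rfl⟩ := ConjClasses.mk_surjective q
  obtain ⟨γ, rfl⟩ := Path.Homotopic.Quotient.mk_surjective a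
  refine ⟨γ.toFreeLoop, ?_⟩
  change γ.toFreeLoop.basedLoop.conjClass x = _
  rw [γ.basedLoop_toFreeLoop, Path.conjClass_cast, Path.conjClass_eq_mk]

def zerothHomotopyFreeLoopEquivConjClasses (x : X) :
    ZerothHomotopy C(𝕋, X) ≃ ConjClasses (FundamentalGroup X x) :=
  (Quotient.congrRight fun _ _ ↦ (ContinuousMap.conjClass_basedLoop_eq_iff x).symm).trans
    (Setoid.quotientKerEquivOfSurjective _ (surjective_conjClass_basedLoop x))

end PathConnected

end

/-- For a path-connected space `X`, the path components of the free loop space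
`C(Circle, X)` are in bijection with the conjugacy classes of the fundamental group of
`X`. -/
theorem zerothHomotopy_freeLoopSpace_equiv_conjClasses {X : Type*} [TopologicalSpace X]
    [PathConnectedSpace X] (x : X) :
    Nonempty (ZerothHomotopy C(Circle, X) ≃ ConjClasses (FundamentalGroup X x)) :=
  ⟨((AddCircle.homeomorphCircle one_ne_zero).arrowCongr (.refl X)).symm.zerothHomotopyCongr.trans
    (zerothHomotopyFreeLoopEquivConjClasses x)⟩
end

section
/- Let X be an aspherical topological space and x : X. Let ev : C(Circle, X) → X be evaluation at the basepoint, ev γ = γ 1, which is continuous, and let c_x ∈ C(Circle, X) be the constant loop at x. Then the homomorphism induced by ev on fundamental groups, from FundamentalGroup C(Circle, X) c_x to FundamentalGroup X x, is a group isomorphism. -/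
/-!
Surjectivity: constant loops form a continuous section `X → C(Circle, X)` of evaluation.

Injectivity: let `Γ` be a loop of free loops at the constant loop whose trace `t ↦ Γ t 1` is
contracted by a homotopy `G`. Conjugating each loop `Γ t` by the path `G (·, t)` restricted to
`[0, u]`, for `u` running from `0` to `1`, deforms `Γ` into a loop of loops based at `x`, i.e.
into a map `I × I → X` sending the boundary to `x`. That is an element of `π₂(X, x) = 0`, and
its null-homotopy rel boundary is a null-homotopy of the loop of based loops.

Families of free loops are built from maps `Z × I → X` agreeing on `Z × {0}` and `Z × {1}`:
`s ↦ exp (2πis)` is proper, so its product with `id_Z` is a quotient map.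
-/

universe u

/-- The homomorphism on fundamental groups induced by a continuous map `f : C(X, Y)`,
sending the class of a loop `γ` at `x` to the class of `f ∘ γ` at `f x`. -/
noncomputable def FundamentalGroup.inducedHom {X Y : Type u} [TopologicalSpace X]
    [TopologicalSpace Y] (f : C(X, Y)) (x : X) :
    FundamentalGroup X x →* FundamentalGroup Y (f x) :=
  (FundamentalGroupoid.fundamentalGroupoidFunctor.map
    (X := TopCat.of X) (Y := TopCat.of Y) (TopCat.ofHom f)).mapEnd (FundamentalGroupoid.mk x)

open Set unitInterval Topology Topology.Homotopy ContinuousMap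
open scoped Real

noncomputable section

namespace Circle

def expUnitInterval : C(I, Circle) := ⟨fun s => exp (2 * π * s), by fun_prop⟩

lemma expUnitInterval_apply (s : I) : expUnitInterval s = exp (2 * π * s) := rfl

@[simp] lemma expUnitInterval_zero : expUnitInterval 0 = 1 := by simp [expUnitInterval_apply]

@[simp] lemma expUnitInterval_one : expUnitInterval 1 = 1 := by simp [expUnitInterval_apply]

lemma expUnitInterval_surjective : Function.Surjective expUnitInterval := by
  intro z
  obtain ⟨θ, ⟨hθ₀, hθ₁⟩, rfl⟩ : z ∈ exp '' Icc 0 (0 + 2 * π) := by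
    rw [periodic_exp.image_Icc Real.two_pi_pos, exp_surjective.range_eq]
    trivial
  refine ⟨⟨θ / (2 * π), div_nonneg hθ₀ Real.two_pi_pos.le,
    (div_le_one Real.two_pi_pos).2 (by linarith)⟩, ?_⟩
  simp [expUnitInterval_apply, mul_div_cancel₀ _ Real.two_pi_pos.ne']

lemma eq_of_expUnitInterval_eq {s t : I} (h : expUnitInterval s = expUnitInterval t) :
    s = t ∨ s = 0 ∧ t = 1 ∨ s = 1 ∧ t = 0 := by
  obtain ⟨m, hm⟩ := exp_eq_exp.1 h
  have hst : (s : ℝ) = t + m := mul_left_cancel₀ Real.two_pi_pos.ne' (by rw [hm]; ring)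
  have hm₁ : m ≤ 1 := by exact_mod_cast (by linarith [s.2.2, t.2.1] : (m : ℝ) ≤ 1)
  have hm₀ : -1 ≤ m := by exact_mod_cast (by linarith [s.2.1, t.2.2] : (-1 : ℝ) ≤ m)
  interval_cases m <;> push_cast at hst
  · refine .inr <| .inl ⟨Subtype.ext ?_, Subtype.ext ?_⟩ <;>
      simp only [Icc.coe_zero, Icc.coe_one] <;> linarith [s.2.1, t.2.2]
  · exact .inl <| Subtype.ext <| by simpa using hst
  · refine .inr <| .inr ⟨Subtype.ext ?_, Subtype.ext ?_⟩ <;>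
      simp only [Icc.coe_zero, Icc.coe_one] <;> linarith [s.2.2, t.2.1]

lemma isQuotientMap_prodMap_expUnitInterval (Z : Type*) [TopologicalSpace Z] :
    IsQuotientMap ((ContinuousMap.id Z).prodMap expUnitInterval) :=
  (isProperMap_id.prodMap expUnitInterval.continuous.isProperMap).isClosedMap.isQuotientMap
    (by fun_prop) (Function.surjective_id.prodMap expUnitInterval_surjective)

lemma factorsThrough_prodMap_expUnitInterval {Z X : Type*} [TopologicalSpace Z] {f : Z × I → X}
    (hf : ∀ z, f (z, 0) = f (z, 1)) :
    Function.FactorsThrough f ((ContinuousMap.id Z).prodMap expUnitInterval) := by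
  rintro ⟨z, s⟩ ⟨z', t⟩ h
  obtain ⟨rfl, hst⟩ := Prod.ext_iff.1 h
  rcases eq_of_expUnitInterval_eq hst with rfl | ⟨rfl, rfl⟩ | ⟨rfl, rfl⟩
  exacts [rfl, hf z, (hf z).symm]

end Circle

open Circle

namespace ContinuousMap

variable {Z X : Type*} [TopologicalSpace Z] [TopologicalSpace X]

def circleCurry (f : C(Z × I, X)) (hf : ∀ z, f (z, 0) = f (z, 1)) : C(Z, C(Circle, X)) :=
  ((isQuotientMap_prodMap_expUnitInterval Z).lift f
    (factorsThrough_prodMap_expUnitInterval hf)).curry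

@[simp] lemma circleCurry_apply_expUnitInterval (f : C(Z × I, X))
    (hf : ∀ z, f (z, 0) = f (z, 1)) (z : Z) (s : I) :
    circleCurry f hf z (expUnitInterval s) = f (z, s) :=
  DFunLike.congr_fun ((isQuotientMap_prodMap_expUnitInterval Z).lift_comp f
    (factorsThrough_prodMap_expUnitInterval hf)) (z, s)

lemma ext_expUnitInterval {γ γ' : C(Circle, X)}
    (h : ∀ s, γ (expUnitInterval s) = γ' (expUnitInterval s)) : γ = γ' :=
  ext <| expUnitInterval_surjective.forall.2 h

end ContinuousMap

variable {X : Type*} [TopologicalSpace X] {x : X}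

theorem Path.homotopic_of_circleCurry
    {Γ₀ Γ₁ : Path (ContinuousMap.const Circle x) (ContinuousMap.const Circle x)}
    (H : C((I × I) × I, X)) (hH : ∀ p, H (p, 0) = H (p, 1))
    (h₀ : ∀ t s, H ((0, t), s) = Γ₀ t (expUnitInterval s))
    (h₁ : ∀ t s, H ((1, t), s) = Γ₁ t (expUnitInterval s))
    (hx : ∀ u s, H ((u, 0), s) = x ∧ H ((u, 1), s) = x) : Γ₀.Homotopic Γ₁ :=
  ⟨{ toContinuousMap := circleCurry H hH
     map_zero_left t := ext_expUnitInterval fun s => by simp [h₀]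
     map_one_left t := ext_expUnitInterval fun s => by simp [h₁]
     prop' u t ht := by
       rcases ht with rfl | rfl
       all_goals exact ext_expUnitInterval fun s => by simp [hx] }⟩

namespace GenLoop

def toFreeLoopPath (Q : Ω^ (Fin 2) X x) :
    Path (ContinuousMap.const Circle x) (ContinuousMap.const Circle x) where
  toContinuousMap := circleCurry ⟨fun p => Q ![p.1, p.2], by fun_prop⟩ fun t => by
    simp [boundary Q ![t, 0] ⟨1, .inl rfl⟩, boundary Q ![t, 1] ⟨1, .inr rfl⟩]
  source' := ext_expUnitInterval fun s => by simp [boundary Q ![0, s] ⟨0, .inl rfl⟩]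
  target' := ext_expUnitInterval fun s => by simp [boundary Q ![1, s] ⟨0, .inr rfl⟩]

@[simp] lemma toFreeLoopPath_apply (Q : Ω^ (Fin 2) X x) (t s : I) :
    toFreeLoopPath Q t (expUnitInterval s) = Q ![t, s] := by
  simp [toFreeLoopPath]

theorem toFreeLoopPath_homotopic_refl {Q : Ω^ (Fin 2) X x} (hQ : Homotopic Q const) :
    (toFreeLoopPath Q).Homotopic (Path.refl _) := by
  obtain ⟨Φ⟩ := hQ
  have hΦ (u : I) (y) (hy : y ∈ Cube.boundary (Fin 2)) : Φ (u, y) = x :=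
    (Φ.eq_fst u hy).trans (boundary Q y hy)
  refine Path.homotopic_of_circleCurry ⟨fun p => Φ (p.1.1, ![p.1.2, p.2]), by fun_prop⟩
    (fun p => ?_) (fun t s => ?_) (fun t s => ?_) (fun u s => ?_)
  · simp [hΦ p.1 ![p.2, 0] ⟨1, .inl rfl⟩, hΦ p.1 ![p.2, 1] ⟨1, .inr rfl⟩]
  · simp
  · simp
  · simp [hΦ u ![0, s] ⟨0, .inl rfl⟩, hΦ u ![1, s] ⟨0, .inr rfl⟩]

end GenLoop

namespace Path

variable (Γ : Path (ContinuousMap.const Circle x) (ContinuousMap.const Circle x))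
  (G : (Γ.map (continuous_eval_const (1 : Circle))).Homotopy (Path.refl x))

lemma apply_exp_eq_homotopy_of_abs_eq {t : I} {r : ℝ} (h : |r - 1 / 2| = 1 / 2) :
    Γ t (exp (2 * π * r)) = G (projIcc 0 1 zero_le_one (|r - 1 / 2| - 1 / 2), t) := by
  have hexp : exp (2 * π * r) = 1 := by
    rcases (abs_eq (by norm_num)).1 h with h | h
    · obtain rfl : r = 1 := by linarith
      simp
    · obtain rfl : r = 0 := by linarith
      simp
  rw [h, sub_self, hexp, projIcc_left]
  exact (G.apply_zero t).symm

/-- On `[0, 1]` this runs through `Γ t`; at distance `d ≤ 1` outside `[0, 1]` it sits at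
`G (d, t)`. So its restriction to `[-u, 1 + u]` is `Γ t` conjugated by `G (·, t)` on `[0, u]`. -/
def conjLoops : C(I × ℝ, X) where
  toFun p := if |p.2 - 1 / 2| ≤ 1 / 2 then Γ p.1 (exp (2 * π * p.2))
    else G (projIcc 0 1 zero_le_one (|p.2 - 1 / 2| - 1 / 2), p.1)
  continuous_toFun := Continuous.if_le (by fun_prop) (by fun_prop) (by fun_prop) (by fun_prop)
    fun _ h => Γ.apply_exp_eq_homotopy_of_abs_eq G h

lemma conjLoops_of_abs_le {t : I} {r : ℝ} (h : |r - 1 / 2| ≤ 1 / 2) :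
    Γ.conjLoops G (t, r) = Γ t (exp (2 * π * r)) :=
  if_pos h

lemma conjLoops_of_le_abs {t : I} {r : ℝ} (h : 1 / 2 ≤ |r - 1 / 2|) :
    Γ.conjLoops G (t, r) = G (projIcc 0 1 zero_le_one (|r - 1 / 2| - 1 / 2), t) := by
  rcases h.eq_or_lt with h | h
  · exact (if_pos h.ge).trans (Γ.apply_exp_eq_homotopy_of_abs_eq G h.symm)
  · exact if_neg h.not_ge

lemma conjLoops_zero_left (r : ℝ) : Γ.conjLoops G (0, r) = x := by
  by_cases h : |r - 1 / 2| ≤ 1 / 2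
  · simp [conjLoops_of_abs_le Γ G h]
  · simp [conjLoops_of_le_abs Γ G (le_of_not_ge h), G.source]

lemma conjLoops_one_left (r : ℝ) : Γ.conjLoops G (1, r) = x := by
  by_cases h : |r - 1 / 2| ≤ 1 / 2
  · simp [conjLoops_of_abs_le Γ G h]
  · simp [conjLoops_of_le_abs Γ G (le_of_not_ge h), G.target]

def conjSphere : Ω^ (Fin 2) X x :=
  ⟨⟨fun y => Γ.conjLoops G (y 0, 3 * y 1 - 1), by fun_prop⟩, by
    intro y hy
    change Γ.conjLoops G (y 0, 3 * (y 1 : ℝ) - 1) = x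
    rcases Fin.exists_fin_two.1 hy with (h | h) | (h | h) <;> rw [h]
    · exact Γ.conjLoops_zero_left G _
    · exact Γ.conjLoops_one_left G _
    all_goals rw [conjLoops_of_le_abs Γ G (by norm_num)]; norm_num [G.apply_one]⟩

lemma conjSphere_apply (t s : I) : Γ.conjSphere G ![t, s] = Γ.conjLoops G (t, 3 * s - 1) := rfl

theorem homotopic_toFreeLoopPath_conjSphere :
    Γ.Homotopic (GenLoop.toFreeLoopPath (Γ.conjSphere G)) := by
  have hsymm (t : I) {a : ℝ} (ha : 1 / 2 ≤ a) :
      Γ.conjLoops G (t, 1 / 2 - a) = Γ.conjLoops G (t, 1 / 2 + a) := by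
    rw [conjLoops_of_le_abs Γ G (by rwa [sub_sub_cancel_left, abs_neg, abs_of_pos (by linarith)]),
      conjLoops_of_le_abs Γ G (by rwa [add_sub_cancel_left, abs_of_pos (by linarith)]),
      sub_sub_cancel_left, add_sub_cancel_left, abs_neg]
  refine homotopic_of_circleCurry
    ⟨fun p => Γ.conjLoops G (p.1.2, 1 / 2 + (p.2 - 1 / 2) * (1 + 2 * p.1.1)), by fun_prop⟩
    (fun p => ?_) (fun t s => ?_) (fun t s => ?_) (fun u s => ?_)
  · simp only [ContinuousMap.coe_mk, Icc.coe_zero, Icc.coe_one]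
    convert hsymm p.2 (a := (1 + 2 * p.1.1) / 2) (by linarith [p.1.2.1]) using 3 <;> ring
  · rw [ContinuousMap.coe_mk, Icc.coe_zero, mul_zero, add_zero, mul_one, add_sub_cancel,
      conjLoops_of_abs_le Γ G (abs_sub_le_iff.2 ⟨by linarith [s.2.2], by linarith [s.2.1]⟩)]
    rfl
  · simp only [ContinuousMap.coe_mk, Icc.coe_one, GenLoop.toFreeLoopPath_apply, conjSphere_apply]
    ring_nf
  · simp [conjLoops_zero_left, conjLoops_one_left]

theorem homotopic_refl_of_map_eval_homotopic_refl (hX : Subsingleton (HomotopyGroup (Fin 2) X x))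
    (hΓ : (Γ.map (continuous_eval_const (1 : Circle))).Homotopic (Path.refl x)) :
    Γ.Homotopic (Path.refl _) := by
  obtain ⟨G⟩ := hΓ
  have hsphere : GenLoop.Homotopic (Γ.conjSphere G) GenLoop.const :=
    Quotient.exact (Subsingleton.elim (α := HomotopyGroup (Fin 2) X x) ⟦_⟧ ⟦_⟧)
  exact (Γ.homotopic_toFreeLoopPath_conjSphere G).trans
    (GenLoop.toFreeLoopPath_homotopic_refl hsphere)

end Path

end

lemma FundamentalGroup.inducedHom_mk {X Y : Type u} [TopologicalSpace X] [TopologicalSpace Y]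
    (f : C(X, Y)) {x : X} (p : Path x x) :
    inducedHom f x (.mk p) = Path.Homotopic.Quotient.mk (p.map f.continuous) :=
  rfl

/-- For an aspherical space `X` with basepoint `x`, evaluation at the basepoint of the
circle induces an isomorphism from the fundamental group of the free loop space
`C(Circle, X)` based at the constant loop at `x` onto the fundamental group of `X` at
`x`. -/
theorem evaluation_inducedHom_bijective {X : Type u} [TopologicalSpace X]
    (hX : ∀ n : ℕ, 2 ≤ n → ∀ x : X, Subsingleton (HomotopyGroup (Fin n) X x)) (x : X) :
    Function.Bijective
      (FundamentalGroup.inducedHom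
        (⟨fun γ : C(Circle, X) => γ 1, ContinuousEvalConst.continuous_eval_const 1⟩ :
          C(C(Circle, X), X))
        (ContinuousMap.const Circle x)) := by
  constructor
  · refine (injective_iff_map_eq_one _).2 fun a ha => ?_
    induction a using Path.Homotopic.Quotient.ind with | mk Γ => ?_
    rw [FundamentalGroup.inducedHom_mk] at ha
    exact Path.Homotopic.Quotient.eq.2 <|
      Γ.homotopic_refl_of_map_eval_homotopic_refl (hX 2 le_rfl x) (Path.Homotopic.Quotient.eq.1 ha)
  · intro b
    induction b using Path.Homotopic.Quotient.ind with | mk γ => ?_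
    exact ⟨.mk (γ.map (ContinuousMap.const' : C(X, C(Circle, X))).continuous), rfl⟩
end
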